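/- Corollary 6: Let K ⊆ A_n be an irreducible cyclic code with monic irreducible parity-check polynomial h(x) of degree m > 1 and order n, where n ≠ q^m − 1 and gcd(n, q) = 1. Then the Hamming weight of every element of K is divisible by d = gcd(q − 1, n). -/

import Mathlib

/-!
Let `γ` be the root of `h` in the field `F[X]/(h)`. As `h ∣ X^n - 1`, the element `β = γ^(n/d)`
satisfies `β^d = 1`, hence `β^q = β` because `d ∣ q - 1`, so `β = α` lies in `F^*` and `h` divides
`X^(n/d) - α`. This polynomial therefore annihilates the code: `x^(n/d) z = α z` for every
codeword `z`. Multiplication by `x` shifts coefficients cyclically, so the support of `z`, read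
in `ZMod n`, is invariant under translation by `n/d`, an element of additive order `d`; it is thus
a union of cosets of a subgroup of order `d`.
-/

open Polynomial

namespace CyclicCode

open scoped Classical

variable (F : Type) [Field F] [Fintype F]

/-- The ambient algebra `A_n = GF(q)[x]/(x^n - 1)`. -/
abbrev An (n : ℕ) := AdjoinRoot (X ^ n - 1 : F[X])

/-- The image of `x` in `A_n`. -/
noncomputable def xbar (n : ℕ) : An F n := AdjoinRoot.root _

variable {F}

/-- The proportionality class `P_z = {α • z : α ∈ GF(q)^*}` of `z`. -/
def propClass {n : ℕ} (z : An F n) : Set (An F n) :=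
  {w | ∃ α : F, α ≠ 0 ∧ w = α • z}

/-- The cycle `{x^j • z : j}` of `z`. -/
noncomputable def cyc {n : ℕ} (z : An F n) : Set (An F n) :=
  {w | ∃ j : ℕ, w = xbar F n ^ j * z}

/-- The period of `z`: the least positive `e` with `x^e * z = z`. -/
noncomputable def period {n : ℕ} (z : An F n) : ℕ :=
  sInf {e : ℕ | 0 < e ∧ xbar F n ^ e * z = z}

/-- The order of a polynomial `f`: the least positive `e` with `f ∣ X^e - 1`. -/
noncomputable def polyOrder {F : Type} [Field F] (f : F[X]) : ℕ :=
  sInf {e : ℕ | 0 < e ∧ f ∣ X ^ e - 1}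

/-- The representative of degree `< n` of an element of `A_n`. -/
noncomputable def rep {n : ℕ} (z : An F n) : F[X] :=
  if h : (X ^ n - 1 : F[X]).Monic then AdjoinRoot.modByMonicHom h z else 0

/-- The Hamming weight of an element of `A_n`. -/
noncomputable def wt {n : ℕ} (z : An F n) : ℕ := (rep z).support.card

/-- `c` is the minimal polynomial of `z ∈ A_n`: a polynomial annihilates `z`
iff it is a multiple of `c`. -/
def HasMinPoly {n : ℕ} (z : An F n) (c : F[X]) : Prop :=
  ∀ f : F[X], AdjoinRoot.mk (X ^ n - 1 : F[X]) f * z = 0 ↔ c ∣ f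

/-- The cyclic code of length `n` with parity-check polynomial `h`:
the ideal of `A_n` generated by `(X^n - 1)/h`. -/
noncomputable def code (F : Type) [Field F] (n : ℕ) (h : F[X]) : Ideal (An F n) :=
  Ideal.span {AdjoinRoot.mk (X ^ n - 1 : F[X]) ((X ^ n - 1) / h)}

/-- The proportionality classes meeting a set `C`. -/
def classesOf {n : ℕ} (C : Set (An F n)) : Set (Set (An F n)) :=
  {P | ∃ z ∈ C, P = propClass z}

/-- The cycles meeting a set `C`. -/
noncomputable def cyclesOf {n : ℕ} (C : Set (An F n)) : Set (Set (An F n)) :=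
  {S | ∃ z ∈ C, S = cyc z}

/-- The minimum Hamming distance of a linear code `J ⊆ A_n`. -/
noncomputable def minDist {n : ℕ} (J : Ideal (An F n)) : ℕ :=
  sInf {k : ℕ | ∃ z ∈ J, z ≠ 0 ∧ wt z = k}

/-- The multiplicative order of `q` modulo `n`. -/
noncomputable def multOrder (q n : ℕ) : ℕ :=
  sInf {e : ℕ | 0 < e ∧ q ^ e ≡ 1 [MOD n]}

lemma _root_.AddSubgroup.card_dvd_card_of_add_mem {G : Type*} [AddCommGroup G] (H : AddSubgroup G)
    (S : Finset G) (hS : ∀ x ∈ S, ∀ y ∈ H, x + y ∈ S) : Nat.card H ∣ S.card := by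
  rw [Finset.card_eq_sum_card_image (QuotientAddGroup.mk (s := H)) S]
  refine Finset.dvd_sum fun c hc => ?_
  obtain ⟨s, hs, rfl⟩ := Finset.mem_image.mp hc
  rw [← Nat.card_eq_finsetCard]
  refine dvd_of_eq (Nat.card_congr
    { toFun := fun y => ⟨s + y, by simp [hS s hs y y.2, QuotientAddGroup.eq]⟩
      invFun := fun x => ⟨-s + x, QuotientAddGroup.eq.mp (Finset.mem_filter.mp x.2).2.symm⟩
      left_inv := fun y => by ext; simp
      right_inv := fun x => by ext; simp })

lemma addOrderOf_dvd_card_of_add_mem_iff {G : Type*} [AddCommGroup G] (g : G) (S : Finset G)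
    (hS : ∀ x, x + g ∈ S ↔ x ∈ S) : addOrderOf g ∣ S.card := by
  rw [← Nat.card_zmultiples]
  refine (AddSubgroup.zmultiples g).card_dvd_card_of_add_mem S ?_
  rintro x hx _ ⟨k, rfl⟩
  induction k using Int.induction_on with
  | zero => simpa using hx
  | succ k ih =>
    dsimp only at ih ⊢
    rw [add_one_zsmul, ← add_assoc, hS]
    exact ih
  | pred k ih =>
    dsimp only at ih ⊢
    rw [← hS, add_assoc, ← add_one_zsmul, sub_add_cancel]
    exact ih

section Representative

variable {F : Type} [Field F] {n : ℕ}

lemma monic_X_pow_sub_one (hn : n ≠ 0) : (X ^ n - 1 : F[X]).Monic := by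
  simpa using monic_X_pow_sub_C (1 : F) hn

lemma degree_X_pow_sub_one (hn : n ≠ 0) : (X ^ n - 1 : F[X]).degree = n := by
  simpa using degree_X_pow_sub_C (Nat.pos_of_ne_zero hn) (1 : F)

lemma rep_mk (hn : n ≠ 0) (f : F[X]) :
    rep (AdjoinRoot.mk (X ^ n - 1 : F[X]) f) = f %ₘ (X ^ n - 1) := by
  rw [rep, dif_pos (monic_X_pow_sub_one hn), AdjoinRoot.modByMonicHom_mk]

lemma mk_rep (hn : n ≠ 0) (z : An F n) : AdjoinRoot.mk (X ^ n - 1 : F[X]) (rep z) = z := by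
  rw [rep, dif_pos (monic_X_pow_sub_one hn)]
  exact AdjoinRoot.mk_leftInverse _ z

lemma degree_rep_lt (hn : n ≠ 0) (z : An F n) : (rep z).degree < n := by
  obtain ⟨f, rfl⟩ := AdjoinRoot.mk_surjective z
  rw [rep_mk hn]
  simpa [degree_X_pow_sub_one hn] using
    degree_modByMonic_lt f (monic_X_pow_sub_one (F := F) hn)

lemma coeff_rep_eq_zero (hn : n ≠ 0) (z : An F n) {k : ℕ} (hk : n ≤ k) : (rep z).coeff k = 0 :=
  coeff_eq_zero_of_degree_lt ((degree_rep_lt hn z).trans_le (by exact_mod_cast hk))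

-- `X ^ 0 - 1 = 0` is not monic, so `rep` takes its junk value `0`.
lemma wt_of_length_zero (z : An F 0) : wt z = 0 := by
  rw [wt, rep, dif_neg (by simp [Monic.def]), support_zero, Finset.card_empty]

lemma rep_smul (c : F) (z : An F n) : rep (c • z) = c • rep z := by
  unfold rep
  split_ifs <;> simp

lemma rep_xbar_mul (hn : n ≠ 0) (z : An F n) :
    rep (xbar F n * z) = X * rep z - C ((rep z).coeff (n - 1)) * (X ^ n - 1) := by
  set p := rep z
  have hmonic := monic_X_pow_sub_one (F := F) hn
  have hxz : xbar F n * z = AdjoinRoot.mk _ (X * p) := by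
    rw [map_mul, mk_rep hn, AdjoinRoot.mk_X, xbar]
  rw [hxz, rep_mk hn]
  refine (div_modByMonic_unique (C (p.coeff (n - 1))) _ hmonic ⟨by ring, ?_⟩).2
  rw [degree_X_pow_sub_one hn, degree_lt_iff_coeff_zero]
  intro m hm
  obtain ⟨k, rfl⟩ : ∃ k, m = k + 1 := ⟨m - 1, by omega⟩
  rcases eq_or_ne k (n - 1) with rfl | hk
  · rw [coeff_sub, coeff_X_mul, coeff_C_mul, Nat.sub_add_cancel (Nat.pos_of_ne_zero hn)]
    simp [coeff_one, hn]
  · have hpk : p.coeff k = 0 := coeff_rep_eq_zero hn z (by omega)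
    simp [coeff_X_pow, coeff_one, hpk, show k + 1 ≠ n by omega]

noncomputable def cyclicCoeff (z : An F n) (i : ZMod n) : F := (rep z).coeff i.val

lemma cyclicCoeff_smul (c : F) (z : An F n) (i : ZMod n) :
    cyclicCoeff (c • z) i = c * cyclicCoeff z i := by
  simp [cyclicCoeff, rep_smul]

lemma cyclicCoeff_xbar_mul [NeZero n] (z : An F n) (i : ZMod n) :
    cyclicCoeff (xbar F n * z) (i + 1) = cyclicCoeff z i := by
  have hn := NeZero.ne n
  have hi : i + 1 = ((i.val + 1 : ℕ) : ZMod n) := by simp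
  rw [hi, cyclicCoeff, cyclicCoeff, ZMod.val_natCast, rep_xbar_mul hn]
  rcases (show i.val + 1 < n ∨ i.val + 1 = n by have := ZMod.val_lt i; omega) with hlt | heq
  · rw [Nat.mod_eq_of_lt hlt]
    simp [coeff_X_pow, coeff_one, hlt.ne]
  · rw [heq, Nat.mod_self, show i.val = n - 1 by omega]
    simp [coeff_one, hn.symm]

lemma cyclicCoeff_xbar_pow_mul [NeZero n] (z : An F n) (k : ℕ) (i : ZMod n) :
    cyclicCoeff (xbar F n ^ k * z) (i + k) = cyclicCoeff z i := by
  induction k generalizing i with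
  | zero => simp
  | succ k ih => rw [pow_succ', mul_assoc, Nat.cast_succ, ← add_assoc, cyclicCoeff_xbar_mul, ih]

lemma wt_eq_card_cyclicCoeff_ne_zero [NeZero n] (z : An F n) :
    wt z = (Finset.univ.filter fun i : ZMod n => cyclicCoeff z i ≠ 0).card := by
  have hlt : ∀ k, (rep z).coeff k ≠ 0 → k < n := fun k hk => by
    by_contra! hnk
    exact hk (coeff_rep_eq_zero (NeZero.ne n) z hnk)
  symm
  refine Finset.card_nbij' ZMod.val Nat.cast (fun i hi => ?_) (fun k hk => ?_) (fun i _ => ?_)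
    (fun k hk => ?_)
  · simp only [Finset.mem_coe, Finset.mem_filter, mem_support_iff] at hi ⊢
    exact hi.2
  · simp only [Finset.mem_coe, Finset.mem_filter, mem_support_iff] at hk ⊢
    simpa [cyclicCoeff, ZMod.val_natCast, Nat.mod_eq_of_lt (hlt k hk)] using hk
  · simp
  · simp [ZMod.val_natCast, Nat.mod_eq_of_lt (hlt k (mem_support_iff.mp hk))]

end Representative

lemma mk_mul_eq_zero_of_mem_code {F : Type} [Field F] {n : ℕ} {h : F[X]} (hn : h ∣ X ^ n - 1)
    {z : An F n} (hz : z ∈ code F n h) : AdjoinRoot.mk (X ^ n - 1 : F[X]) h * z = 0 := by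
  obtain ⟨t, rfl⟩ := Ideal.mem_span_singleton'.mp hz
  have hcancel : h * ((X ^ n - 1) / h) = X ^ n - 1 := by
    rcases eq_or_ne h 0 with rfl | h0
    · simpa using (zero_dvd_iff.mp hn).symm
    · exact EuclideanDomain.mul_div_cancel' h0 hn
  rw [mul_left_comm, ← map_mul, hcancel, AdjoinRoot.mk_self, mul_zero]

lemma exists_algebraMap_eq_of_pow_card_eq_self {F K : Type*} [Field F] [Fintype F] [Field K]
    [Algebra F K] {β : K} (hβ : β ^ Fintype.card F = β) : ∃ a : F, algebraMap F K a = β := by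
  have hq := Fintype.one_lt_card (α := F)
  have hsplit : (X ^ Fintype.card F - X : F[X]).Splits := by
    rw [splits_iff_card_roots, FiniteField.roots_X_pow_card_sub_X,
      FiniteField.X_pow_card_sub_X_natDegree_eq F hq]
    rfl
  have hroot : β ∈ ((X ^ Fintype.card F - X : F[X]).map (algebraMap F K)).roots := by
    rw [mem_roots (map_ne_zero (FiniteField.X_pow_card_sub_X_ne_zero F hq))]
    simp [hβ]
  rw [hsplit.roots_map_of_injective (algebraMap F K).injective,
    FiniteField.roots_X_pow_card_sub_X] at hroot
  simpa using hroot

lemma exists_dvd_X_pow_div_sub_C {F : Type} [Field F] [Fintype F] {h : F[X]} (hirr : Irreducible h)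
    {n d : ℕ} (hn : h ∣ X ^ n - 1) (hdn : d ∣ n) (hdq : d ∣ Fintype.card F - 1) :
    ∃ α : F, α ≠ 0 ∧ h ∣ X ^ (n / d) - C α := by
  have : Fact (Irreducible h) := ⟨hirr⟩
  have hq := Fintype.one_lt_card (α := F)
  set γ := AdjoinRoot.root h
  have hγn : γ ^ n = 1 := by simpa [sub_eq_zero] using AdjoinRoot.mk_eq_zero.mpr hn
  have hβd : (γ ^ (n / d)) ^ d = 1 := by rw [← pow_mul, Nat.div_mul_cancel hdn, hγn]
  have hβq1 : (γ ^ (n / d)) ^ (Fintype.card F - 1) = 1 := by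
    obtain ⟨k, hk⟩ := hdq
    rw [hk, pow_mul, hβd, one_pow]
  obtain ⟨α, hα⟩ := exists_algebraMap_eq_of_pow_card_eq_self (F := F) (β := γ ^ (n / d)) (by
    rw [← Nat.sub_add_cancel Fintype.card_pos, pow_succ, hβq1, one_mul])
  refine ⟨α, ?_, ?_⟩
  · rintro rfl
    rw [← hα, map_zero, zero_pow (by omega)] at hβq1
    exact zero_ne_one hβq1
  · rw [← AdjoinRoot.mk_eq_zero, map_sub, map_pow, AdjoinRoot.mk_X, AdjoinRoot.mk_C, ← hα,
      AdjoinRoot.algebraMap_eq, sub_self]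

lemma dvd_X_pow_polyOrder_sub_one {F : Type} [Field F] {f : F[X]} (hf : polyOrder f ≠ 0) :
    f ∣ X ^ polyOrder f - 1 :=
  (Nat.sInf_mem (Nat.nonempty_of_pos_sInf (Nat.pos_of_ne_zero hf))).2

theorem gcd_card_sub_one_dvd_wt_of_mem_code {F : Type} [Field F] [Fintype F] {n : ℕ} [NeZero n]
    {h : F[X]} (hirr : Irreducible h) (hn : h ∣ X ^ n - 1) {z : An F n} (hz : z ∈ code F n h) :
    Nat.gcd (Fintype.card F - 1) n ∣ wt z := by
  set d := Nat.gcd (Fintype.card F - 1) n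
  have hdn : d ∣ n := Nat.gcd_dvd_right _ _
  obtain ⟨α, hα, u, hu⟩ := exists_dvd_X_pow_div_sub_C hirr hn hdn (Nat.gcd_dvd_left _ _)
  have hshift : xbar F n ^ (n / d) * z = α • z := by
    have hann : AdjoinRoot.mk (X ^ n - 1 : F[X]) (X ^ (n / d) - C α) * z = 0 := by
      rw [hu, map_mul, mul_comm (AdjoinRoot.mk _ h), mul_assoc, mk_mul_eq_zero_of_mem_code hn hz,
        mul_zero]
    rwa [map_sub, map_pow, AdjoinRoot.mk_X, AdjoinRoot.mk_C, sub_mul, sub_eq_zero,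
      ← AdjoinRoot.algebraMap_eq, ← Algebra.smul_def] at hann
  have hinv : ∀ i : ZMod n, cyclicCoeff z (i + (n / d : ℕ)) ≠ 0 ↔ cyclicCoeff z i ≠ 0 := by
    intro i
    rw [← cyclicCoeff_xbar_pow_mul z (n / d) i, hshift, cyclicCoeff_smul, mul_ne_zero_iff,
      and_iff_right hα]
  have hord : addOrderOf ((n / d : ℕ) : ZMod n) = d := by
    rw [ZMod.addOrderOf_coe _ (NeZero.ne n), Nat.gcd_eq_right (Nat.div_dvd_of_dvd hdn),
      Nat.div_div_self hdn (NeZero.ne n)]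
  rw [wt_eq_card_cyclicCoeff_ne_zero, ← hord]
  exact addOrderOf_dvd_card_of_add_mem_iff _ _ fun i => by simpa using hinv i

theorem stmt11_general {F : Type} [Field F] [Fintype F] (q n : ℕ)
    (hcard : Fintype.card F = q)
    (h : F[X]) (hirr : Irreducible h)
    (hord : polyOrder h = n) :
    ∀ z : An F n, z ∈ code F n h → Nat.gcd (q - 1) n ∣ wt z := by
  intro z hz
  subst hcard
  rcases eq_or_ne n 0 with rfl | hn
  · simp [wt_of_length_zero]
  · have : NeZero n := ⟨hn⟩
    subst hord
    exact gcd_card_sub_one_dvd_wt_of_mem_code hirr (dvd_X_pow_polyOrder_sub_one hn) hz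

/-- Corollary 6: the Hamming weight of every element of an
irreducible nonprimitive cyclic code `K` is divisible by `d = gcd(q - 1, n)`. -/
theorem stmt11 {F : Type} [Field F] [Fintype F] (q n m : ℕ)
    (hcard : Fintype.card F = q) (hq : 2 < q) (hm : 1 < m)
    (h : F[X]) (hmon : h.Monic) (hirr : Irreducible h) (hdeg : h.natDegree = m)
    (hord : polyOrder h = n) (hnp : n ≠ q ^ m - 1) (hco : Nat.Coprime n q) :
    ∀ z : An F n, z ∈ code F n h → Nat.gcd (q - 1) n ∣ wt z :=
  stmt11_general q n hcard h hirr hord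

end CyclicCode
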